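/- Define p*(α) = (2^α(3+α) − 4 − 2α)/(2 + 2^α(α−1)) for α ≥ 1. Then p* attains a global maximum on [1, ∞) at some α* ∈ (2, 3), and p*(α*) < 2.2. -/

import Mathlib

/-!
`p*` is continuous, so it attains a maximum on `[1, 3]`. Bounding the convex function `2 ^ α` by
its chords over a few intervals turns every estimate on `p*` into a quadratic inequality in `α`:
`p* ≤ 2` on `[1, 2]`, `p* < 2.2` on `[2, 3]` and `p* ≤ 2.115` on `[3, ∞)`, while
`p*(2.75) > 2.115`. Hence the maximiser on `[1, 3]` lies in `(2, 3)` and is a global maximiser.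
-/

open Real

/-- The critical power `p*(α) = (2^α(3+α) − 4 − 2α)/(2 + 2^α(α−1))`. -/
noncomputable def pstar (α : ℝ) : ℝ :=
  ((2 : ℝ) ^ α * (3 + α) - 4 - 2 * α) / (2 + (2 : ℝ) ^ α * (α - 1))

open Set

theorem ConvexOn.sub_mul_le_chord {s : Set ℝ} {f : ℝ → ℝ} (hf : ConvexOn ℝ s f) {x y z : ℝ}
    (hx : x ∈ s) (hz : z ∈ s) (hxy : x ≤ y) (hyz : y ≤ z) :
    (z - x) * f y ≤ (z - y) * f x + (y - x) * f z := by
  rcases hxy.eq_or_lt with rfl | hxy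
  · linarith
  rcases hyz.eq_or_lt with rfl | hyz
  · linarith
  exact hf.secant_mono_aux1 hx hz hxy hyz

theorem rpow_le_of_rpow_mul_le_pow {b x y : ℝ} {n : ℕ} (hb : 0 ≤ b) (hy : 0 ≤ y) (hn : n ≠ 0)
    (h : b ^ (x * n) ≤ y ^ n) : b ^ x ≤ y := by
  rw [rpow_mul hb, rpow_natCast] at h
  exact le_of_pow_le_pow_left₀ hn hy h

theorem le_rpow_of_pow_le_rpow_mul {b x y : ℝ} {n : ℕ} (hb : 0 ≤ b) (hn : n ≠ 0)
    (h : y ^ n ≤ b ^ (x * n)) : y ≤ b ^ x := by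
  rw [rpow_mul hb, rpow_natCast] at h
  exact le_of_pow_le_pow_left₀ hn (rpow_nonneg hb x) h

theorem pstar_denom_pos {α : ℝ} (hα : 1 ≤ α) : 0 < 2 + (2 : ℝ) ^ α * (α - 1) := by
  have := rpow_pos_of_pos two_pos α
  nlinarith

theorem continuousOn_pstar : ContinuousOn pstar (Ici 1) := by
  have := continuous_const_rpow (two_ne_zero (α := ℝ))
  exact ContinuousOn.div (by fun_prop) (by fun_prop) fun α hα ↦ (pstar_denom_pos hα).ne'

theorem pstar_le_iff {α c : ℝ} (hα : 1 ≤ α) :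
    pstar α ≤ c ↔ (2 : ℝ) ^ α * (3 + α - c * (α - 1)) ≤ 4 + 2 * α + 2 * c := by
  rw [pstar, div_le_iff₀ (pstar_denom_pos hα)]
  constructor <;> intro h <;> linarith

theorem lt_pstar_iff {α c : ℝ} (hα : 1 ≤ α) :
    c < pstar α ↔ 4 + 2 * α + 2 * c < (2 : ℝ) ^ α * (3 + α - c * (α - 1)) := by
  simpa only [not_le] using (pstar_le_iff hα).not

theorem pstar_le_of_coeff_nonpos {α c : ℝ} (hα : 1 ≤ α) (hc : 0 ≤ c)
    (hk : 3 + α - c * (α - 1) ≤ 0) : pstar α ≤ c := by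
  rw [pstar_le_iff hα]
  nlinarith [rpow_pos_of_pos two_pos α]

theorem pstar_le_of_chord {a b A B c α : ℝ} (ha : 1 ≤ a) (hab : a < b) (hα : α ∈ Icc a b)
    (hA : (2 : ℝ) ^ a ≤ A) (hB : (2 : ℝ) ^ b ≤ B) (hk : 0 ≤ 3 + α - c * (α - 1))
    (hquad : ((b - α) * A + (α - a) * B) * (3 + α - c * (α - 1)) ≤ (b - a) * (4 + 2 * α + 2 * c)) :
    pstar α ≤ c := by
  rw [pstar_le_iff (ha.trans hα.1)]
  have hchord := (convexOn_rpow_left two_pos).sub_mul_le_chord (mem_univ a) (mem_univ b) hα.1 hα.2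
  have hchord' : (b - a) * (2 : ℝ) ^ α ≤ (b - α) * A + (α - a) * B := by
    nlinarith [sub_nonneg.2 hα.1, sub_nonneg.2 hα.2]
  refine le_of_mul_le_mul_left ?_ (sub_pos.2 hab)
  calc (b - a) * ((2 : ℝ) ^ α * (3 + α - c * (α - 1)))
      = (b - a) * (2 : ℝ) ^ α * (3 + α - c * (α - 1)) := by ring
    _ ≤ ((b - α) * A + (α - a) * B) * (3 + α - c * (α - 1)) := by gcongr
    _ ≤ (b - a) * (4 + 2 * α + 2 * c) := hquad

theorem pstar_le_two_of_le_two {α : ℝ} (h1 : 1 ≤ α) (h2 : α ≤ 2) : pstar α ≤ 2 :=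
  pstar_le_of_chord (A := 2) (B := 4) le_rfl one_lt_two ⟨h1, h2⟩ (by norm_num) (by norm_num)
    (by linarith) (by nlinarith [mul_nonneg (sub_nonneg.2 h1) (sub_nonneg.2 h2)])

theorem pstar_lt_of_mem_Icc_two_three {α : ℝ} (hα : α ∈ Icc 2 3) : pstar α < 2.2 := by
  have : pstar α ≤ 2.19 :=
    pstar_le_of_chord (A := 4) (B := 8) one_le_two (by norm_num) hα (by norm_num) (by norm_num)
      (by linarith [hα.2]) (by nlinarith [sq_nonneg (α - 2.47)])
  linarith

theorem two_rpow_seven_halves_le : (2 : ℝ) ^ (3.5 : ℝ) ≤ 11.32 :=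
  rpow_le_of_rpow_mul_le_pow (n := 2) zero_le_two (by norm_num) two_ne_zero (by norm_num)

theorem le_two_rpow_eleven_fourths : (6.72 : ℝ) ≤ 2 ^ (2.75 : ℝ) :=
  le_rpow_of_pow_le_rpow_mul (n := 4) zero_le_two four_ne_zero (by norm_num)

theorem pstar_le_of_three_le {α : ℝ} (h3 : 3 ≤ α) : pstar α ≤ 2.115 := by
  have h1 : 1 ≤ α := by linarith
  rcases le_total (3 + α - 2.115 * (α - 1)) 0 with hk | hk
  · exact pstar_le_of_coeff_nonpos h1 (by norm_num) hk
  have h35 := two_rpow_seven_halves_le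
  rcases le_total α 3.5 with h | h
  · exact pstar_le_of_chord (A := 8) (by norm_num) (by norm_num) ⟨h3, h⟩ (by norm_num) h35 hk
      (by nlinarith [sq_nonneg (α - 3.06)])
  rcases le_total α 4 with h' | h'
  · exact pstar_le_of_chord (B := 16) (by norm_num) (by norm_num) ⟨h, h'⟩ h35 (by norm_num) hk
      (by nlinarith [mul_nonneg (sub_nonneg.2 h) (sub_nonneg.2 h')])
  · have h5 : α ≤ 5 := by linarith
    exact pstar_le_of_chord (A := 16) (B := 32) (by norm_num) (by norm_num) ⟨h', h5⟩
      (by norm_num) (by norm_num) hk (by nlinarith [mul_nonneg (sub_nonneg.2 h') (sub_nonneg.2 h5)])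

theorem lt_pstar_eleven_fourths : 2.115 < pstar 2.75 := by
  rw [lt_pstar_iff (by norm_num)]
  nlinarith [le_two_rpow_eleven_fourths]

/-- `p*` attains a global maximum on `[1,∞)` at some `α* ∈ (2,3)`, with `p*(α*) < 2.2`. -/
theorem stmt6 :
    ∃ αstar : ℝ, 2 < αstar ∧ αstar < 3 ∧
      (∀ α : ℝ, 1 ≤ α → pstar α ≤ pstar αstar) ∧ pstar αstar < 2.2 := by
  obtain ⟨αstar, ⟨h1, -⟩, hmax⟩ := isCompact_Icc.exists_isMaxOn
    (nonempty_Icc.2 (by norm_num : (1 : ℝ) ≤ 3)) (continuousOn_pstar.mono Icc_subset_Ici_self)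
  have hlarge : 2.115 < pstar αstar :=
    lt_pstar_eleven_fourths.trans_le (hmax (by norm_num : (2.75 : ℝ) ∈ Icc 1 3))
  have h2 : 2 < αstar := by
    by_contra! h
    linarith [pstar_le_two_of_le_two h1 h]
  have h3 : αstar < 3 := by
    by_contra! h
    linarith [pstar_le_of_three_le h]
  refine ⟨αstar, h2, h3, fun α hα ↦ ?_, pstar_lt_of_mem_Icc_two_three ⟨h2.le, h3.le⟩⟩
  rcases le_total α 3 with h | h
  · exact hmax ⟨hα, h⟩
  · exact (pstar_le_of_three_le h).trans hlarge.le
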